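/- Let μ = λ + 2(log n)/(α₂ n) and assume μ ≤ 1 and n ≥ 2. Then for each k ∈ {1,…,n}, P(max_{1≤ℓ≤n} X_ℓ ≤ 2 − μ | I_k = 1) ≤ 1/n. -/

import Mathlib

/-!
Given `I_k = 1`, the event requires each of the other `n - 1` independent samples to fall below
`2 - μ`. By the mixture formula a single sample does so with probability
`α₁ + α₂ (1 + λ - μ) = 1 - 2 log n / n`, and for `n ≥ 2`
`(1 - 2 log n / n) ^ (n - 1) ≤ exp (-2 (n - 1) log n / n) ≤ exp (-log n) = 1 / n`.
-/

open MeasureTheory ProbabilityTheory Set Real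

lemma ProbabilityTheory.iIndepFun.measure_iInter_inter_le_mul_pow {Ω ι β : Type*}
    [MeasurableSpace Ω] {P : Measure Ω} [Fintype ι] [MeasurableSpace β] {Y : ι → Ω → β}
    (hY : iIndepFun Y P) {A B : Set β} (hA : MeasurableSet A) (hB : MeasurableSet B) {q : ENNReal}
    (hq : ∀ i, P (Y i ⁻¹' B) = q) (k : ι) :
    P ((⋂ i, Y i ⁻¹' B) ∩ Y k ⁻¹' A) ≤ P (Y k ⁻¹' A) * q ^ (Fintype.card ι - 1) := by
  classical
  set S : ι → Set β := Function.update (fun _ => B) k A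
  have hS i : MeasurableSet (S i) := by
    simp only [S, Function.update_apply]; split_ifs <;> assumption
  have hsub : (⋂ i, Y i ⁻¹' B) ∩ Y k ⁻¹' A ⊆ ⋂ i, Y i ⁻¹' S i := by
    rintro ω ⟨hωB, hωA⟩
    refine mem_iInter.2 fun i => ?_
    simp only [S, Function.update_apply]
    split_ifs with hik
    · exact hik ▸ hωA
    · exact mem_iInter.1 hωB i
  have hfactor i : P (Y i ⁻¹' S i) = Function.update (fun _ => q) k (P (Y k ⁻¹' A)) i := by
    simp only [S, Function.update_apply]; split_ifs with hik
    · rw [hik]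
    · exact hq i
  calc P ((⋂ i, Y i ⁻¹' B) ∩ Y k ⁻¹' A) ≤ P (⋂ i, Y i ⁻¹' S i) := measure_mono hsub
    _ = ∏ i, P (Y i ⁻¹' S i) := hY.meas_iInter fun i => ⟨S i, hS i, rfl⟩
    _ = P (Y k ⁻¹' A) * q ^ (Fintype.card ι - 1) := by
      rw [Finset.prod_congr rfl fun i _ => hfactor i,
        Finset.prod_update_of_mem (Finset.mem_univ k), Finset.prod_const,
        Finset.card_sdiff_of_subset (by simp), Finset.card_singleton, Finset.card_univ]

lemma measureReal_eq_add_of_forall_eq_or_eq {Ω β : Type*} [MeasurableSpace Ω] {P : Measure Ω}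
    [IsFiniteMeasure P] [MeasurableSpace β] [MeasurableSingletonClass β] {L : Ω → β}
    (hL : Measurable L) {a b : β} (hab : a ≠ b) (hrange : ∀ ω, L ω = a ∨ L ω = b) (E : Set Ω) :
    P.real E = P.real ({ω | L ω = a} ∩ E) + P.real ({ω | L ω = b} ∩ E) := by
  have hdiff : E \ {ω | L ω = a} = {ω | L ω = b} ∩ E := by
    ext ω
    have := hrange ω
    simp only [mem_sdiff, mem_ofPred_eq, mem_inter_iff]
    constructor
    · rintro ⟨hE, hne⟩; exact ⟨this.resolve_left hne, hE⟩
    · rintro ⟨hb, hE⟩; exact ⟨hE, hb ▸ hab.symm⟩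
  have ha : MeasurableSet {ω | L ω = a} := hL (measurableSet_singleton a)
  rw [← measureReal_inter_add_sdiff ha, hdiff, inter_comm]

lemma setIntegral_Iic_indicator_Icc_one {a b c : ℝ} (hac : a ≤ c) (hab : a ≤ b) :
    ∫ t in Iic c, (Icc a b).indicator (fun _ => (1 : ℝ)) t = min c b - a := by
  have hinter : Iic c ∩ Icc a b = Icc a (min c b) := by
    ext x; simp only [mem_inter_iff, mem_Iic, mem_Icc, le_min_iff]; tauto
  rw [setIntegral_indicator measurableSet_Icc, hinter, setIntegral_const, smul_eq_mul, mul_one,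
    Real.volume_real_Icc_of_le (le_min hac hab)]

lemma log_le_div_two_self {x : ℝ} (hx : 0 < x) : log x ≤ x / 2 := by
  have h := log_le_sub_one_of_pos (half_pos hx)
  rw [log_div hx.ne' two_ne_zero] at h
  linarith [log_two_lt_d9]

lemma one_sub_two_log_div_pow_le {n : ℕ} (hn : 2 ≤ n) :
    (1 - 2 * log n / n) ^ (n - 1) ≤ 1 / n := by
  have hn0 : (0 : ℝ) < n := by positivity
  have h2n : (2 : ℝ) ≤ n := by exact_mod_cast hn
  set x := 2 * log n / n
  have hx1 : 0 ≤ 1 - x := by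
    rw [sub_nonneg, div_le_one hn0]; linarith [log_le_div_two_self hn0]
  have hxn : log n ≤ x * ((n - 1 : ℕ) : ℝ) := by
    rw [Nat.cast_sub (by omega), Nat.cast_one, div_mul_eq_mul_div, le_div_iff₀ hn0]
    nlinarith [log_nonneg (by linarith : (1 : ℝ) ≤ n)]
  calc (1 - x) ^ (n - 1) ≤ exp (-x) ^ (n - 1) :=
        pow_le_pow_left₀ hx1 (by linarith [add_one_le_exp (-x)]) _
    _ = exp (-(x * ((n - 1 : ℕ) : ℝ))) := by rw [← exp_nat_mul]; ring_nf
    _ ≤ exp (-log n) := exp_le_exp.2 (neg_le_neg hxn)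
    _ = 1 / n := by rw [exp_neg, exp_log hn0, one_div]

lemma measureReal_preimage_Iic_of_uniform_mixture {Ω : Type*} [MeasurableSpace Ω]
    {P : Measure Ω} [IsProbabilityMeasure P] {X₀ : Ω → ℝ} {I₀ : Ω → ℕ} (hI : Measurable I₀)
    (hrange : ∀ ω, I₀ ω = 1 ∨ I₀ ω = 2) {α : ℕ → ℝ} (hα : ∀ i, α i = P.real {ω | I₀ ω = i})
    {lam c : ℝ}
    (hg1 : ∀ s : Set ℝ, MeasurableSet s →
      P.real ({ω | I₀ ω = 1} ∩ X₀ ⁻¹' s)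
        = α 1 * ∫ t in s, (Icc (0 : ℝ) 1).indicator (fun _ => (1 : ℝ)) t)
    (hg2 : ∀ s : Set ℝ, MeasurableSet s →
      P.real ({ω | I₀ ω = 2} ∩ X₀ ⁻¹' s)
        = α 2 * ∫ t in s, (Icc (1 - lam) (2 - lam)).indicator (fun _ => (1 : ℝ)) t)
    (hlam : 0 ≤ lam) (hc₁ : 1 ≤ c) (hc₂ : c ≤ 2 - lam) :
    P.real (X₀ ⁻¹' Iic c) = 1 - α 2 * (2 - lam - c) := by
  have hsplit :=
    measureReal_eq_add_of_forall_eq_or_eq (P := P) hI (by decide : (1 : ℕ) ≠ 2) hrange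
  have hsum : α 1 + α 2 = 1 := by
    simpa [← hα] using (hsplit univ).symm
  rw [hsplit, hg1 _ measurableSet_Iic, hg2 _ measurableSet_Iic,
    setIntegral_Iic_indicator_Icc_one (by linarith) zero_le_one,
    setIntegral_Iic_indicator_Icc_one (by linarith) (by linarith),
    min_eq_right hc₁, min_eq_left hc₂]
  linear_combination hsum

/-- In the two-component uniform mixture with overlap `λ`, for
`μ = λ + 2(log n)/(α₂ n) ≤ 1` and `n ≥ 2`, one has
`P(max_ℓ X_ℓ ≤ 2 − μ | I_k = 1) ≤ 1/n` for each `k`, stated here as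
`P({max_ℓ X_ℓ ≤ 2 − μ} ∩ {I_k = 1}) ≤ (1/n) P(I_k = 1)`. -/
theorem stmt_15 {Ω : Type*} [MeasurableSpace Ω] (P : Measure Ω) [IsProbabilityMeasure P]
    (n : ℕ) (hn : 2 ≤ n) (lam : ℝ) (hlam : lam ∈ Set.Ioo (0 : ℝ) 1)
    (X : Fin n → Ω → ℝ) (I : Fin n → Ω → ℕ)
    (hXmeas : ∀ k, Measurable (X k)) (hImeas : ∀ k, Measurable (I k))
    (hIrange : ∀ k ω, I k ω = 1 ∨ I k ω = 2)
    -- the pairs (X_k, I_k) are i.i.d.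
    (hindep : iIndepFun (fun k ω => (X k ω, I k ω)) P)
    (hident : ∀ k : Fin n,
      Measure.map (fun ω => (X k ω, I k ω)) P
        = Measure.map (fun ω => (X ⟨0, by omega⟩ ω, I ⟨0, by omega⟩ ω)) P)
    -- mixture weights
    (α : ℕ → ℝ) (hα : ∀ i, α i = (P {ω | I ⟨0, by omega⟩ ω = i}).toReal)
    (hα2 : α 2 ∈ Set.Ioo (0 : ℝ) 1)
    -- conditional densities: g₁ = 1_{[0,1]} and g₂ = 1_{[1−λ, 2−λ]}
    (hg1 : ∀ s : Set ℝ, MeasurableSet s →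
      (P ({ω | I ⟨0, by omega⟩ ω = 1} ∩ (X ⟨0, by omega⟩) ⁻¹' s)).toReal
        = α 1 * ∫ t in s, (Set.Icc (0 : ℝ) 1).indicator (fun _ => (1 : ℝ)) t)
    (hg2 : ∀ s : Set ℝ, MeasurableSet s →
      (P ({ω | I ⟨0, by omega⟩ ω = 2} ∩ (X ⟨0, by omega⟩) ⁻¹' s)).toReal
        = α 2 * ∫ t in s, (Set.Icc (1 - lam) (2 - lam)).indicator (fun _ => (1 : ℝ)) t)
    (μ : ℝ) (hμ : μ = lam + 2 * Real.log n / (α 2 * n)) (hμ1 : μ ≤ 1) :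
    ∀ k : Fin n,
      (P ({ω | ∀ ℓ : Fin n, X ℓ ω ≤ 2 - μ} ∩ {ω | I k ω = 1})).toReal
        ≤ 1 / n * (P {ω | I k ω = 1}).toReal := by
  intro k
  set k₀ : Fin n := ⟨0, by omega⟩
  set Y : Fin n → Ω → ℝ × ℕ := fun ℓ ω => (X ℓ ω, I ℓ ω)
  have hYmeas ℓ : Measurable (Y ℓ) := (hXmeas ℓ).prodMk (hImeas ℓ)
  have hB : MeasurableSet (Prod.fst ⁻¹' Iic (2 - μ) : Set (ℝ × ℕ)) :=
    measurable_fst measurableSet_Iic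
  have hq ℓ : P (Y ℓ ⁻¹' (Prod.fst ⁻¹' Iic (2 - μ))) = P (X k₀ ⁻¹' Iic (2 - μ)) :=
    (IdentDistrib.mk (hYmeas ℓ).aemeasurable (hYmeas k₀).aemeasurable
      (hident ℓ)).measure_mem_eq hB
  have hα2pos := hα2.1
  have hμlam : lam ≤ μ := hμ ▸ le_add_of_nonneg_right (by positivity)
  have hqval : P.real (X k₀ ⁻¹' Iic (2 - μ)) = 1 - 2 * log n / n := by
    rw [measureReal_preimage_Iic_of_uniform_mixture (hImeas k₀) (hIrange k₀) hα hg1 hg2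
      hlam.1.le (by linarith) (by linarith), hμ]
    field_simp
    ring
  have hevent : {ω | ∀ ℓ : Fin n, X ℓ ω ≤ 2 - μ} ∩ {ω | I k ω = 1}
      = (⋂ ℓ, Y ℓ ⁻¹' (Prod.fst ⁻¹' Iic (2 - μ))) ∩ Y k ⁻¹' (Prod.snd ⁻¹' {1}) := by
    ext ω; simp [Y]
  have hbound := hindep.measure_iInter_inter_le_mul_pow
    (measurable_snd (measurableSet_singleton 1)) hB hq k
  calc P.real ({ω | ∀ ℓ : Fin n, X ℓ ω ≤ 2 - μ} ∩ {ω | I k ω = 1})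
      ≤ P.real {ω | I k ω = 1} * P.real (X k₀ ⁻¹' Iic (2 - μ)) ^ (n - 1) := by
        rw [hevent]
        refine (ENNReal.toReal_mono (by finiteness) hbound).trans_eq ?_
        rw [ENNReal.toReal_mul, ENNReal.toReal_pow, Fintype.card_fin]
        rfl
    _ ≤ P.real {ω | I k ω = 1} * (1 / n) := by
        rw [hqval]
        gcongr
        exact one_sub_two_log_div_pow_le hn
    _ = 1 / n * P.real {ω | I k ω = 1} := mul_comm _ _
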